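/- arXiv:1903.00942 — 3 statements merged into one kernel-verified Lean document; each statement's English description precedes it below -/
import Mathlib

section
/- Let k be a field complete with respect to a non-archimedean absolute value, let A be a Banach k-algebra, let M be a Banach A-module, and let (m_i) be a finite strongly generating family of M. If (n_i) is a family of elements of M (indexed by the same set) with ‖n_i − m_i‖ < ‖m_i‖ for every i, then (n_i) is also a strongly generating family of M. -/
/-!
STATEMENT 4: small perturbations of a strongly generating family of a Banach module
over a Banach `k`-algebra are again strongly generating.
-/

noncomputable section

/-- A Banach module structure over a normed ring `A`: a complete non-archimedean norm
`nm` on the `A`-module `M` with `nm (a • x) ≤ ‖a‖ · nm x`.  Completeness is expressed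
via Cauchy sequences. -/
structure BanachModuleNorm (A : Type*) [NormedRing A]
    (M : Type*) [AddCommGroup M] [Module A M] where
  nm : M → ℝ
  nonneg : ∀ x, 0 ≤ nm x
  eq_zero_iff : ∀ x, nm x = 0 ↔ x = 0
  nm_neg : ∀ x, nm (-x) = nm x
  add_le : ∀ x y, nm (x + y) ≤ max (nm x) (nm y)
  smul_le : ∀ (a : A) (x : M), nm (a • x) ≤ ‖a‖ * nm x
  complete : ∀ u : ℕ → M,
    (∀ ε : ℝ, 0 < ε → ∃ N : ℕ, ∀ p ≥ N, ∀ q ≥ N, nm (u p - u q) < ε) →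
    ∃ x : M, ∀ ε : ℝ, 0 < ε → ∃ N : ℕ, ∀ p ≥ N, nm (u p - x) < ε

/-- A finite family `g` of elements of a Banach `A`-module is strongly generating if all
its members are nonzero and every `x ∈ M` can be written `x = ∑ a_i • g i` with
`nm x = max_i ‖a_i‖ · nm (g i)`. -/
def StronglyGenerating {A : Type*} [NormedRing A]
    {M : Type*} [AddCommGroup M] [Module A M] (hM : BanachModuleNorm A M)
    {s : ℕ} (g : Fin s → M) : Prop :=
  (∀ i, g i ≠ 0) ∧
  ∀ x : M, ∃ a : Fin s → A,
    x = ∑ i, a i • g i ∧ hM.nm x = ⨆ i, ‖a i‖ * hM.nm (g i)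

namespace BanachModuleNorm

variable {A : Type*} [NormedRing A] {M : Type*} [AddCommGroup M] [Module A M]
  (hM : BanachModuleNorm A M)

lemma nm_zero : hM.nm 0 = 0 := (hM.eq_zero_iff 0).mpr rfl

lemma nm_sum_le {ι : Type*} (t : Finset ι) (f : ι → M) {C : ℝ} (hC : 0 ≤ C)
    (h : ∀ i ∈ t, hM.nm (f i) ≤ C) : hM.nm (∑ i ∈ t, f i) ≤ C := by
  classical
  induction t using Finset.cons_induction with
  | empty => simpa [hM.nm_zero] using hC
  | cons i t hi ih =>
    rw [Finset.sum_cons]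
    exact (hM.add_le _ _).trans (max_le (h i (Finset.mem_cons_self _ _))
      (ih fun j hj => h j (Finset.mem_cons_of_mem hj)))

end BanachModuleNorm

theorem stronglyGenerating_of_small_perturbation
    (k : Type*) [NormedField k] [CompleteSpace k] [IsUltrametricDist k]
    (A : Type*) [NormedRing A] [NormedAlgebra k A] [CompleteSpace A] [IsUltrametricDist A]
    (M : Type*) [AddCommGroup M] [Module A M] (hM : BanachModuleNorm A M)
    {s : ℕ} (mfam : Fin s → M) (nfam : Fin s → M)
    (hgen : StronglyGenerating hM mfam)
    (hclose : ∀ i, hM.nm (nfam i - mfam i) < hM.nm (mfam i)) :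
    StronglyGenerating hM nfam := by
  obtain ⟨hm_ne, hrep⟩ := hgen
  have hm_pos : ∀ i, 0 < hM.nm (mfam i) := fun i =>
    lt_of_le_of_ne (hM.nonneg _) fun h => hm_ne i ((hM.eq_zero_iff _).mp h.symm)
  have hnm_eq : ∀ i, hM.nm (nfam i) = hM.nm (mfam i) := by
    intro i
    have h1 : hM.nm (nfam i) ≤ hM.nm (mfam i) := by
      have h := hM.add_le (mfam i) (nfam i - mfam i)
      rw [add_sub_cancel] at h
      exact h.trans (max_le le_rfl (hclose i).le)
    refine le_antisymm h1 ?_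
    by_contra hlt
    push_neg at hlt
    have h := hM.add_le (nfam i) (mfam i - nfam i)
    rw [add_sub_cancel] at h
    have h2 : hM.nm (mfam i - nfam i) = hM.nm (nfam i - mfam i) := by
      rw [← hM.nm_neg (mfam i - nfam i), neg_sub]
    exact absurd (h.trans_lt (max_lt hlt (by rw [h2]; exact hclose i))) (lt_irrefl _)
  have hn_pos : ∀ i, 0 < hM.nm (nfam i) := fun i => (hnm_eq i) ▸ hm_pos i
  have hn_ne : ∀ i, nfam i ≠ 0 := fun i h => (hn_pos i).ne' ((hM.eq_zero_iff _).mpr h)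
  rcases Nat.eq_zero_or_pos s with hs | hs
  · subst hs
    refine ⟨fun i => i.elim0, fun x => ?_⟩
    obtain ⟨a, hx, hnx⟩ := hrep x
    refine ⟨a, by simpa using hx, hnx.trans ?_⟩
    rw [iSup, iSup, Set.range_eq_empty, Set.range_eq_empty]
  haveI : Nonempty (Fin s) := ⟨⟨0, hs⟩⟩
  set c : ℝ := Finset.univ.sup' Finset.univ_nonempty
    (fun i => hM.nm (nfam i - mfam i) / hM.nm (mfam i)) with hc
  have hc0 : 0 ≤ c := by
    rw [hc]
    exact le_trans (div_nonneg (hM.nonneg _) (hM.nonneg _))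
      (Finset.le_sup' (fun i => hM.nm (nfam i - mfam i) / hM.nm (mfam i))
        (Finset.mem_univ (Classical.arbitrary (Fin s))))
  have hc1 : c < 1 := by
    rw [hc, Finset.sup'_lt_iff]
    exact fun i _ => (div_lt_one (hm_pos i)).mpr (hclose i)
  have hci : ∀ i, hM.nm (nfam i - mfam i) ≤ c * hM.nm (mfam i) := by
    intro i
    rw [hc]
    exact (div_le_iff₀ (hm_pos i)).mp
      (Finset.le_sup' (fun i => hM.nm (nfam i - mfam i) / hM.nm (mfam i)) (Finset.mem_univ i))
  set F : M → Fin s → A := fun y => (hrep y).choose with hF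
  have hF1 : ∀ y, y = ∑ i, F y i • mfam i := fun y => (hrep y).choose_spec.1
  have hF2 : ∀ y, hM.nm y = ⨆ i, ‖F y i‖ * hM.nm (mfam i) := fun y => (hrep y).choose_spec.2
  have hF3 : ∀ y i, ‖F y i‖ * hM.nm (mfam i) ≤ hM.nm y := by
    intro y i
    rw [hF2 y]
    exact le_ciSup (f := fun i => ‖F y i‖ * hM.nm (mfam i))
      (Set.Finite.bddAbove (Set.finite_range _)) i
  set g : M → M := fun y => y - ∑ i, F y i • nfam i with hg
  have hgle : ∀ y, hM.nm (g y) ≤ c * hM.nm y := by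
    intro y
    have hy : g y = ∑ i, F y i • (mfam i - nfam i) := by
      simp only [hg, smul_sub, Finset.sum_sub_distrib]
      rw [← hF1 y]
    rw [hy]
    refine hM.nm_sum_le _ _ (mul_nonneg hc0 (hM.nonneg y)) ?_
    intro i _
    calc hM.nm (F y i • (mfam i - nfam i)) ≤ ‖F y i‖ * hM.nm (mfam i - nfam i) := hM.smul_le _ _
      _ ≤ ‖F y i‖ * (c * hM.nm (mfam i)) := by
          refine mul_le_mul_of_nonneg_left ?_ (norm_nonneg _)
          rw [← hM.nm_neg, neg_sub]; exact hci i
      _ = c * (‖F y i‖ * hM.nm (mfam i)) := by ring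
      _ ≤ c * hM.nm y := mul_le_mul_of_nonneg_left (hF3 y i) hc0
  refine ⟨hn_ne, fun x => ?_⟩
  set X : ℕ → M := fun j => g^[j] x with hX
  have hX0 : X 0 = x := rfl
  have hXg : ∀ j, X (j+1) = g (X j) := fun j => Function.iterate_succ_apply' g j x
  have hXb : ∀ j, hM.nm (X j) ≤ c ^ j * hM.nm x := by
    intro j; induction j with
    | zero => simp [hX0]
    | succ j ih =>
      calc hM.nm (X (j+1)) = hM.nm (g (X j)) := by rw [hXg]
        _ ≤ c * hM.nm (X j) := hgle _
        _ ≤ c * (c ^ j * hM.nm x) := mul_le_mul_of_nonneg_left ih hc0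
        _ = c ^ (j+1) * hM.nm x := by ring
  set b : ℕ → Fin s → A := fun j => F (X j) with hb
  have hbb : ∀ j i, ‖b j i‖ * hM.nm (mfam i) ≤ c ^ j * hM.nm x := fun j i =>
    (hF3 (X j) i).trans (hXb j)
  have hbn : ∀ j i, ‖b j i‖ ≤ c ^ j * (hM.nm x / hM.nm (mfam i)) := by
    intro j i
    rw [mul_div_assoc']
    exact (le_div_iff₀ (hm_pos i)).mpr (hbb j i)
  have hsum : ∀ i, Summable fun j => b j i := by
    intro i
    refine Summable.of_norm ?_
    exact Summable.of_nonneg_of_le (fun j => norm_nonneg _) (fun j => hbn j i)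
      ((summable_geometric_of_lt_one hc0 hc1).mul_right _)
  set a : Fin s → A := fun i => ∑' j, b j i with ha
  have hSa : ∀ i, Filter.Tendsto (fun N => ∑ j ∈ Finset.range N, b j i)
      Filter.atTop (nhds (a i)) := fun i => (hsum i).hasSum.tendsto_sum_nat
  have hIco : ∀ (N P : ℕ) i, ‖∑ j ∈ Finset.Ico N P, b j i‖ ≤
      c ^ N * (hM.nm x / hM.nm (mfam i)) := by
    intro N P i
    refine IsUltrametricDist.norm_sum_le_of_forall_le_of_nonneg
      (mul_nonneg (pow_nonneg hc0 _) (div_nonneg (hM.nonneg _) (hM.nonneg _))) ?_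
    intro j hj
    refine (hbn j i).trans (mul_le_mul_of_nonneg_right
      (pow_le_pow_of_le_one hc0 hc1.le (Finset.mem_Ico.mp hj).1)
      (div_nonneg (hM.nonneg _) (hM.nonneg _)))
  have htail : ∀ (N : ℕ) i, ‖a i - ∑ j ∈ Finset.range N, b j i‖ * hM.nm (mfam i) ≤
      c ^ N * hM.nm x := by
    intro N i
    rw [← le_div_iff₀ (hm_pos i), mul_div_assoc]
    have hlim : Filter.Tendsto
        (fun P => ‖(∑ j ∈ Finset.range P, b j i) - ∑ j ∈ Finset.range N, b j i‖)
        Filter.atTop (nhds ‖a i - ∑ j ∈ Finset.range N, b j i‖) :=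
      ((hSa i).sub tendsto_const_nhds).norm
    refine le_of_tendsto hlim ?_
    filter_upwards [Filter.eventually_ge_atTop N] with P hP
    rw [← Finset.sum_Ico_eq_sub _ hP]
    exact hIco N P i
  have haB : ∀ i, ‖a i‖ * hM.nm (mfam i) ≤ hM.nm x := by
    intro i
    have h := htail 0 i
    simpa using h
  have hpart : ∀ N, x - ∑ i, (∑ j ∈ Finset.range N, b j i) • nfam i = X N := by
    intro N; induction N with
    | zero => simp [hX0]
    | succ N ih =>
      have h1 : X (N+1) = X N - ∑ i, b N i • nfam i := by
        rw [hXg N]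
      rw [h1, ← ih,
        Finset.sum_congr rfl (fun i (_ : i ∈ Finset.univ) => by
          rw [Finset.sum_range_succ, add_smul]),
        Finset.sum_add_distrib]
      abel
  have htailn : ∀ (N : ℕ), hM.nm (x - ∑ i, a i • nfam i) ≤ c ^ N * hM.nm x := by
    intro N
    have hde : x - ∑ i, a i • nfam i =
        X N + ∑ i, ((∑ j ∈ Finset.range N, b j i) - a i) • nfam i := by
      rw [← hpart N, Finset.sum_congr rfl (fun i _ => sub_smul _ _ (nfam i)),
        Finset.sum_sub_distrib]
      abel
    rw [hde]
    refine (hM.add_le _ _).trans (max_le (hXb N) ?_)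
    refine hM.nm_sum_le _ _ (mul_nonneg (pow_nonneg hc0 _) (hM.nonneg x)) ?_
    intro i _
    calc hM.nm (((∑ j ∈ Finset.range N, b j i) - a i) • nfam i)
        ≤ ‖(∑ j ∈ Finset.range N, b j i) - a i‖ * hM.nm (nfam i) := hM.smul_le _ _
      _ = ‖a i - ∑ j ∈ Finset.range N, b j i‖ * hM.nm (mfam i) := by
          rw [← norm_neg, neg_sub, hnm_eq i]
      _ ≤ c ^ N * hM.nm x := htail N i
  have hy0 : hM.nm (x - ∑ i, a i • nfam i) = 0 := by
    have hten : Filter.Tendsto (fun N : ℕ => c ^ N * hM.nm x) Filter.atTop (nhds 0) := by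
      simpa using (tendsto_pow_atTop_nhds_zero_of_lt_one hc0 hc1).mul_const (hM.nm x)
    exact le_antisymm (ge_of_tendsto' hten htailn) (hM.nonneg _)
  have hxeq : x = ∑ i, a i • nfam i := sub_eq_zero.mp ((hM.eq_zero_iff _).mp hy0)
  refine ⟨a, hxeq, le_antisymm ?_ ?_⟩
  · rw [hxeq]
    refine hM.nm_sum_le _ _ ?_ ?_
    · exact le_trans (mul_nonneg (norm_nonneg (a (Classical.arbitrary (Fin s))))
          (hM.nonneg (nfam (Classical.arbitrary (Fin s)))))
        (le_ciSup (f := fun i => ‖a i‖ * hM.nm (nfam i))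
          (Set.Finite.bddAbove (Set.finite_range _)) (Classical.arbitrary (Fin s)))
    · intro i _
      exact (hM.smul_le _ _).trans (le_ciSup (f := fun i => ‖a i‖ * hM.nm (nfam i))
        (Set.Finite.bddAbove (Set.finite_range _)) i)
  · exact ciSup_le fun i => by rw [hnm_eq i]; exact haB i


end
end

section
/- Let k be a field complete with respect to a non-archimedean absolute value, let A be a k-affinoid algebra, let ρ = (ρ_1,…,ρ_m) be a polyradius, and let ψ : k{Θ/ρ} → A be a distinguished surjection such that the spectral seminorm of f_i := ψ(Θ_i) equals ρ_i for every i. If g_1,…,g_m ∈ A satisfy ‖f_i − g_i‖_sp < ρ_i for every i, then the bounded k-algebra morphism k{Θ/ρ} → A sending Θ_i to g_i for every i is again a distinguished surjection. -/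
noncomputable section

open Filter

universe u v

/-- The weight `r^I = ∏ r i ^ I i` of a multi-index `I`. -/
def mweight {n : ℕ} (r : Fin n → ℝ) (I : Fin n → ℕ) : ℝ := ∏ i, r i ^ I i

/-- `A` *is* the weighted Tate algebra `k{T_1/r_1,…,T_n/r_n}`. -/
structure IsTateAlgebra (k : Type*) [NormedField k] {n : ℕ} (r : Fin n → ℝ)
    (A : Type*) [NormedCommRing A] [NormedAlgebra k A] where
  T : Fin n → A
  coeff : A →ₗ[k] ((Fin n → ℕ) → k)
  coeff_injective : Function.Injective coeff
  coeff_tendsto : ∀ a : A,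
    Tendsto (fun I => ‖coeff a I‖ * mweight r I) cofinite (nhds 0)
  coeff_surjective : ∀ g : (Fin n → ℕ) → k,
    Tendsto (fun I => ‖g I‖ * mweight r I) cofinite (nhds 0) → ∃ a : A, coeff a = g
  norm_eq : ∀ a : A, ‖a‖ = ⨆ I, ‖coeff a I‖ * mweight r I
  coeff_one : coeff 1 = fun I => if I = 0 then (1 : k) else 0
  coeff_T : ∀ i, coeff (T i) = fun I => if I = Pi.single i 1 then (1 : k) else 0
  coeff_mul : ∀ a b : A, ∀ I,
    coeff (a * b) I =
      ∑ p ∈ (Finset.Iic I ×ˢ Finset.Iic I).filter (fun p => p.1 + p.2 = I),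
        coeff a p.1 * coeff b p.2

/-- A ring morphism between normed rings is bounded. -/
def IsBoundedHom {A : Type*} {B : Type*} [NormedRing A] [NormedRing B] (f : A →+* B) : Prop :=
  ∃ C : ℝ, ∀ a, ‖f a‖ ≤ C * ‖a‖

/-- An admissible surjection: surjective, bounded, and the quotient norm is equivalent to
the norm of the target. -/
def IsAdmissibleSurj {A : Type*} {B : Type*} [NormedRing A] [NormedRing B]
    (f : A →+* B) : Prop :=
  IsBoundedHom f ∧ Function.Surjective f ∧
    ∃ C : ℝ, 0 < C ∧ ∀ b : B, ∃ a : A, f a = b ∧ ‖a‖ ≤ C * ‖b‖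

/-- The spectral seminorm `‖a‖_sp = lim_n ‖a^n‖^{1/n} = inf_n ‖a^n‖^{1/n}` of an element
of a normed ring. -/
def spNorm {A : Type*} [NormedRing A] (a : A) : ℝ :=
  ⨅ n : ℕ, ‖a ^ (n + 1)‖ ^ (1 / (n + 1 : ℝ))

/-- A presentation of `A` as an admissible quotient of a weighted Tate algebra over `k`. -/
structure TatePresentation (k : Type u) [NormedField k]
    (A : Type v) [NormedCommRing A] [NormedAlgebra k A] where
  n : ℕ
  r : Fin n → ℝ
  rpos : ∀ i, 0 < r i
  B : Type u
  [instB : NormedCommRing B]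
  [instBA : NormedAlgebra k B]
  tate : IsTateAlgebra k r B
  hom : B →ₐ[k] A

attribute [instance] TatePresentation.instB TatePresentation.instBA

/-- A `k`-affinoid algebra: a Banach `k`-algebra admitting an admissible surjection from
a weighted Tate algebra. -/
def IsAffinoidAlgebra (k : Type u) [NormedField k]
    (A : Type v) [NormedCommRing A] [NormedAlgebra k A] : Prop :=
  ∃ P : TatePresentation k A, IsAdmissibleSurj P.hom.toRingHom

/-- A morphism from a (Tate) normed algebra onto `A` is distinguished if it is bounded,
surjective, and every `a ∈ A` has a preimage `b` with `‖b‖ = ‖a‖_sp`. -/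
def IsDistinguishedSurj {B : Type*} {A : Type*} [NormedRing B] [NormedCommRing A]
    (φ : B →+* A) : Prop :=
  IsBoundedHom φ ∧ Function.Surjective φ ∧ ∀ a : A, ∃ b : B, φ b = a ∧ ‖b‖ = spNorm a

/-- `A` is a distinguished `k`-affinoid algebra: some (admissible) surjection from a
weighted Tate algebra is distinguished. -/
def IsDistinguishedAffinoid (k : Type u) [NormedField k]
    (A : Type v) [NormedCommRing A] [NormedAlgebra k A] : Prop :=
  ∃ P : TatePresentation k A, IsDistinguishedSurj P.hom.toRingHom




/-!
Write `Θᵢ` for the variables and `fᵢ = ψ(Θᵢ)`. Lift each `fᵢ - gᵢ` to some `hᵢ` with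
`‖hᵢ‖ = ‖fᵢ - gᵢ‖_sp < ρᵢ`, and let `σ` be the substitution `Θᵢ ↦ Θᵢ - hᵢ` of the Tate
algebra, so that `ψ ∘ σ` sends `Θᵢ` to `gᵢ`. Since `‖hᵢ‖ ≤ t ρᵢ` for one `t < 1`, the
ultrametric inequality gives `‖σ a - a‖ ≤ t ‖a‖`; hence `σ` is an isometry, and it is
surjective by the contraction principle. Composing the distinguished `ψ` with a surjective
isometry keeps it distinguished, and a bounded morphism out of the Tate algebra is determined
by the images of the `Θᵢ`, because the polynomials are dense.
-/

open Filter Topology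
open scoped NNReal

lemma exists_lt_one_forall_le_mul {ι : Type*} [Finite ι] {a b : ι → ℝ}
    (hb : ∀ i, 0 < b i) (hab : ∀ i, a i < b i) :
    ∃ t : ℝ≥0, t < 1 ∧ ∀ i, a i ≤ t * b i := by
  rcases isEmpty_or_nonempty ι with _ | _
  · exact ⟨0, zero_lt_one, isEmptyElim⟩
  obtain ⟨j, hj⟩ := Finite.exists_max fun i => a i / b i
  refine ⟨(a j / b j).toNNReal, ?_, fun i => ?_⟩
  · rw [Real.toNNReal_lt_one, div_lt_one (hb j)]
    exact hab j
  · rw [← div_le_iff₀ (hb i)]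
    exact (hj i).trans (Real.le_coe_toNNReal _)

theorem AddMonoidHom.surjective_of_norm_sub_le {E : Type*} [NormedAddCommGroup E]
    [CompleteSpace E] (f : E →+ E) {t : ℝ≥0} (ht : t < 1)
    (hf : ∀ x, ‖f x - x‖ ≤ t * ‖x‖) : Function.Surjective f := by
  intro b
  -- a fixed point of `x ↦ b + x - f x` is a preimage of `b`
  have hcontr : ContractingWith t fun x => b + x - f x := by
    refine ⟨ht, LipschitzWith.of_dist_le_mul fun x y => ?_⟩
    have hxy : -(b + x - f x - (b + y - f y)) = f (x - y) - (x - y) := by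
      rw [map_sub]
      abel
    rw [dist_eq_norm, dist_eq_norm, ← norm_neg, hxy]
    exact hf _
  have hfix : b + _ - f _ = _ := hcontr.fixedPoint_isFixedPt
  exact ⟨_, by linear_combination (norm := abel) -hfix⟩

lemma IsUltrametricDist.norm_eq_of_norm_sub_lt {E : Type*} [SeminormedAddCommGroup E]
    [IsUltrametricDist E] {x y : E} (h : ‖y - x‖ < ‖x‖) : ‖y‖ = ‖x‖ := by
  rw [← add_sub_cancel x y, norm_add_eq_max_of_norm_ne_norm h.ne', max_eq_left h.le]

lemma IsDistinguishedSurj.comp_of_norm_eq {B A : Type*} [NormedRing B] [NormedCommRing A]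
    {φ : B →+* A} (hφ : IsDistinguishedSurj φ) {σ : B →+* B} (hσ : ∀ b, ‖σ b‖ = ‖b‖)
    (hσ_surj : Function.Surjective σ) : IsDistinguishedSurj (φ.comp σ) := by
  obtain ⟨⟨C, hC⟩, hφ_surj, hφ_sp⟩ := hφ
  refine ⟨⟨C, fun b => hσ b ▸ hC (σ b)⟩, hφ_surj.comp hσ_surj, fun a => ?_⟩
  obtain ⟨b, rfl, hb⟩ := hφ_sp a
  obtain ⟨b', rfl⟩ := hσ_surj b
  exact ⟨b', rfl, (hσ b').symm.trans hb⟩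

section Ultrametric

variable {R : Type*} [NormedCommRing R] [IsUltrametricDist R]

instance IsUltrametricDist.nonarchimedeanRing : NonarchimedeanRing R where
  is_nonarchimedean := NonarchimedeanAddGroup.is_nonarchimedean

variable [NormOneClass R]

def closeTriples (t : ℝ≥0) : Submonoid ((R × R) × ℝ) where
  carrier := {p | ‖p.1.1‖ ≤ p.2 ∧ ‖p.1.2‖ ≤ p.2 ∧ ‖p.1.1 - p.1.2‖ ≤ t * p.2}
  one_mem' := by simp
  mul_mem' := by
    rintro ⟨⟨x, y⟩, r⟩ ⟨⟨x', y'⟩, r'⟩ ⟨hx, hy, hxy⟩ ⟨hx', hy', hxy'⟩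
    have hr : 0 ≤ r := (norm_nonneg _).trans hx
    refine ⟨(norm_mul_le _ _).trans (mul_le_mul hx hx' (norm_nonneg _) hr),
      (norm_mul_le _ _).trans (mul_le_mul hy hy' (norm_nonneg _) hr), ?_⟩
    show ‖x * x' - y * y'‖ ≤ t * (r * r')
    rw [show x * x' - y * y' = (x - y) * x' + y * (x' - y') by ring]
    refine (IsUltrametricDist.norm_add_le_max _ _).trans (max_le ?_ ?_) <;>
      refine (norm_mul_le _ _).trans ?_
    · calc ‖x - y‖ * ‖x'‖ ≤ t * r * r' := mul_le_mul hxy hx' (norm_nonneg _) (by positivity)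
        _ = t * (r * r') := by ring
    · calc ‖y‖ * ‖x' - y'‖ ≤ r * (t * r') := mul_le_mul hy hxy' (norm_nonneg _) hr
        _ = t * (r * r') := by ring

lemma mem_closeTriples {t : ℝ≥0} {p : (R × R) × ℝ} :
    p ∈ closeTriples t ↔ ‖p.1.1‖ ≤ p.2 ∧ ‖p.1.2‖ ≤ p.2 ∧ ‖p.1.1 - p.1.2‖ ≤ t * p.2 :=
  Iff.rfl

lemma norm_prod_pow_sub_prod_pow_le {ι : Type*} [Fintype ι] {x y : ι → R} {r : ι → ℝ}
    {t : ℝ≥0} (hx : ∀ i, ‖x i‖ ≤ r i) (hy : ∀ i, ‖y i‖ ≤ r i)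
    (hxy : ∀ i, ‖x i - y i‖ ≤ t * r i) (I : ι → ℕ) :
    ‖∏ i, x i ^ I i - ∏ i, y i ^ I i‖ ≤ t * ∏ i, r i ^ I i := by
  have hmem : ∏ i, ((x i, y i), r i) ^ I i ∈ closeTriples t :=
    Submonoid.prod_mem _ fun i _ =>
      Submonoid.pow_mem _ (mem_closeTriples.2 ⟨hx i, hy i, hxy i⟩) (I i)
  simpa [Prod.fst_prod, Prod.snd_prod] using (mem_closeTriples.1 hmem).2.2

end Ultrametric

lemma Fintype.prod_pow_single {ι M : Type*} [Fintype ι] [DecidableEq ι] [CommMonoid M]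
    (x : ι → M) (i : ι) (n : ℕ) : ∏ j, x j ^ (Pi.single i n : ι → ℕ) j = x i ^ n := by
  rw [Finset.prod_eq_single i (fun j _ hj => by simp [Pi.single_eq_of_ne hj]) (by simp)]
  simp

lemma mweight_pos {m : ℕ} {ρ : Fin m → ℝ} (hρ : ∀ i, 0 < ρ i) (I : Fin m → ℕ) :
    0 < mweight ρ I :=
  Finset.prod_pos fun i _ => pow_pos (hρ i) _

lemma mweight_single {m : ℕ} (ρ : Fin m → ℝ) (j : Fin m) :
    mweight ρ (Pi.single j 1) = ρ j := by
  rw [mweight, Fintype.prod_pow_single, pow_one]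

lemma norm_prod_pow_le_mweight {R : Type*} [NormedCommRing R] [NormOneClass R] {m : ℕ}
    {ρ : Fin m → ℝ} {c : Fin m → R} (hc : ∀ i, ‖c i‖ ≤ ρ i) (I : Fin m → ℕ) :
    ‖∏ i, c i ^ I i‖ ≤ mweight ρ I :=
  (Finset.norm_prod_le _ _).trans <| Finset.prod_le_prod (fun _ _ => norm_nonneg _) fun i _ =>
    (norm_pow_le _ _).trans (pow_le_pow_left₀ (norm_nonneg _) (hc i) _)

/-- Chosen so that the Cauchy product formula matches `IsTateAlgebra.coeff_mul` on the nose. -/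
instance {m : ℕ} : Finset.HasAntidiagonal (Fin m → ℕ) where
  antidiagonal I := (Finset.Iic I ×ˢ Finset.Iic I).filter fun p => p.1 + p.2 = I
  mem_antidiagonal {I p} := by
    simp only [Finset.mem_filter, Finset.mem_product, Finset.mem_Iic, and_iff_right_iff_imp]
    rintro rfl
    exact ⟨le_self_add, le_add_self⟩

namespace IsTateAlgebra

variable {k : Type*} [NormedField k] {m : ℕ} {ρ : Fin m → ℝ}
  {B : Type*} [NormedCommRing B] [NormedAlgebra k B] (hB : IsTateAlgebra k ρ B)
include hB

section Coefficients

lemma norm_coeff_mul_mweight_le (a : B) (I : Fin m → ℕ) :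
    ‖hB.coeff a I‖ * mweight ρ I ≤ ‖a‖ :=
  hB.norm_eq a ▸ le_ciSup (hB.coeff_tendsto a).bddAbove_range_of_cofinite I

lemma norm_le_of_forall_norm_coeff_mul_mweight_le {a : B} {C : ℝ}
    (h : ∀ I, ‖hB.coeff a I‖ * mweight ρ I ≤ C) : ‖a‖ ≤ C :=
  hB.norm_eq a ▸ ciSup_le h

lemma coeff_mul_of_coeff_eq {a b : B} {I J : Fin m → ℕ}
    (ha : hB.coeff a = fun K => if K = I then 1 else 0)
    (hb : hB.coeff b = fun K => if K = J then 1 else 0) :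
    hB.coeff (a * b) = fun K => if K = I + J then 1 else 0 := by
  funext K
  have hterm : ∀ p : (Fin m → ℕ) × (Fin m → ℕ),
      ((if p.1 = I then (1 : k) else 0) * if p.2 = J then 1 else 0) =
        if p = (I, J) then 1 else 0 := fun p => by
    simp only [ite_zero_mul_ite_zero, mul_one, Prod.ext_iff]
  rw [hB.coeff_mul, ha, hb]
  simp_rw [hterm]
  rw [Finset.sum_ite_eq']
  exact if_congr (Finset.HasAntidiagonal.mem_antidiagonal.trans eq_comm) rfl rfl

lemma coeff_prod_T_pow (I : Fin m → ℕ) :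
    hB.coeff (∏ i, hB.T i ^ I i) = fun K => if K = I then 1 else 0 := by
  have hadd : ∀ I J : Fin m → ℕ,
      hB.coeff (∏ i, hB.T i ^ I i) = (fun K => if K = I then 1 else 0) →
      hB.coeff (∏ i, hB.T i ^ J i) = (fun K => if K = J then 1 else 0) →
      hB.coeff (∏ i, hB.T i ^ (I + J) i) = fun K => if K = I + J then 1 else 0 := by
    intro I J hI hJ
    simpa only [Pi.add_apply, pow_add, Finset.prod_mul_distrib] using
      hB.coeff_mul_of_coeff_eq hI hJ
  induction I using Pi.single_induction with
  | zero => simpa using hB.coeff_one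
  | add I J hI hJ => exact hadd I J hI hJ
  | single i n =>
    induction n with
    | zero => simpa using hB.coeff_one
    | succ n ih =>
      rw [Pi.single_add]
      refine hadd _ _ ih ?_
      rw [Fintype.prod_pow_single, pow_one]
      exact hB.coeff_T i

variable (hρ : ∀ i, 0 < ρ i)
include hρ

lemma norm_eq_mweight_of_coeff_eq {a : B} {J : Fin m → ℕ}
    (ha : hB.coeff a = fun I => if I = J then 1 else 0) : ‖a‖ = mweight ρ J := by
  refine le_antisymm (hB.norm_le_of_forall_norm_coeff_mul_mweight_le fun I => ?_) ?_
  · rw [ha]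
    dsimp only
    split_ifs with hI
    · simp [hI]
    · simpa using (mweight_pos hρ J).le
  · simpa [ha] using hB.norm_coeff_mul_mweight_le a J

lemma normOneClass : NormOneClass B :=
  ⟨by simpa [mweight] using hB.norm_eq_mweight_of_coeff_eq hρ hB.coeff_one⟩

lemma norm_T (i : Fin m) : ‖hB.T i‖ = ρ i := by
  rw [hB.norm_eq_mweight_of_coeff_eq hρ (hB.coeff_T i), mweight_single]

lemma norm_coeff_le (a : B) (I : Fin m → ℕ) :
    ‖hB.coeff a I‖ ≤ (mweight ρ I)⁻¹ * ‖a‖ := by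
  rw [inv_mul_eq_div, le_div_iff₀ (mweight_pos hρ I)]
  exact hB.norm_coeff_mul_mweight_le a I

lemma continuous_coeff (I : Fin m → ℕ) : Continuous fun a => hB.coeff a I :=
  AddMonoidHomClass.continuous_of_bound ((LinearMap.proj I).comp hB.coeff) _
    (hB.norm_coeff_le hρ · I)

lemma uniformContinuous_coeff (I : Fin m → ℕ) : UniformContinuous fun a => hB.coeff a I :=
  AddMonoidHomClass.uniformContinuous_of_bound ((LinearMap.proj I).comp hB.coeff) _
    (hB.norm_coeff_le hρ · I)

lemma isUltrametricDist [IsUltrametricDist k] : IsUltrametricDist B := by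
  refine IsUltrametricDist.isUltrametricDist_of_forall_norm_add_le_max_norm fun x y =>
    hB.norm_le_of_forall_norm_coeff_mul_mweight_le fun I => ?_
  have hw := (mweight_pos hρ I).le
  calc ‖hB.coeff (x + y) I‖ * mweight ρ I
      ≤ max ‖hB.coeff x I‖ ‖hB.coeff y I‖ * mweight ρ I := by
        rw [map_add]
        exact mul_le_mul_of_nonneg_right (IsUltrametricDist.norm_add_le_max _ _) hw
    _ = max (‖hB.coeff x I‖ * mweight ρ I) (‖hB.coeff y I‖ * mweight ρ I) :=
        max_mul_of_nonneg _ _ hw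
    _ ≤ max ‖x‖ ‖y‖ :=
        max_le_max (hB.norm_coeff_mul_mweight_le x I) (hB.norm_coeff_mul_mweight_le y I)

lemma completeSpace [CompleteSpace k] : CompleteSpace B := by
  refine Metric.complete_of_cauchySeq_tendsto fun u hu => ?_
  choose g hg using fun I =>
    cauchySeq_tendsto_of_complete ((hB.uniformContinuous_coeff hρ I).comp_cauchySeq hu)
  have hclose : ∀ ε > 0, ∃ N, ∀ n ≥ N, ∀ I, ‖hB.coeff (u n) I - g I‖ * mweight ρ I ≤ ε := by
    intro ε hε
    obtain ⟨N, hN⟩ := Metric.cauchySeq_iff.1 hu ε hε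
    refine ⟨N, fun n hn I => le_of_tendsto (((hg I).const_sub _).norm.mul_const _) ?_⟩
    filter_upwards [eventually_ge_atTop N] with q hq
    have hsub : hB.coeff (u n) I - hB.coeff (u q) I = hB.coeff (u n - u q) I := by
      rw [map_sub, Pi.sub_apply]
    rw [Function.comp_apply, hsub]
    exact (hB.norm_coeff_mul_mweight_le _ I).trans (dist_eq_norm (u n) (u q) ▸ (hN n hn q hq).le)
  have hnull : Tendsto (fun I => ‖g I‖ * mweight ρ I) cofinite (𝓝 0) := by
    refine Metric.tendsto_nhds.2 fun ε hε => ?_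
    obtain ⟨N, hN⟩ := hclose (ε / 2) (half_pos hε)
    filter_upwards [Metric.tendsto_nhds.1 (hB.coeff_tendsto (u N)) (ε / 2) (half_pos hε)]
      with I hI
    have hw := (mweight_pos hρ I).le
    rw [Real.dist_0_eq_abs, abs_of_nonneg (by positivity)] at hI ⊢
    calc ‖g I‖ * mweight ρ I
        ≤ (‖hB.coeff (u N) I‖ + ‖hB.coeff (u N) I - g I‖) * mweight ρ I :=
          mul_le_mul_of_nonneg_right (norm_le_norm_add_norm_sub _ _) hw
      _ < ε / 2 + ε / 2 := by linarith [hN N le_rfl I]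
      _ = ε := add_halves ε
  obtain ⟨b, hb⟩ := hB.coeff_surjective g hnull
  refine ⟨b, Metric.tendsto_atTop.2 fun ε hε => ?_⟩
  obtain ⟨N, hN⟩ := hclose (ε / 2) (half_pos hε)
  refine ⟨N, fun n hn => ?_⟩
  rw [dist_eq_norm]
  refine (hB.norm_le_of_forall_norm_coeff_mul_mweight_le fun I => ?_).trans_lt (half_lt_self hε)
  rw [map_sub, Pi.sub_apply, hb]
  exact hN n hn I

end Coefficients

section Expansion

variable [IsUltrametricDist B] [CompleteSpace B] [NormOneClass B]

lemma summable_coeff_smul_prod_pow {c : Fin m → B} (hc : ∀ i, ‖c i‖ ≤ ρ i) (a : B) :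
    Summable fun I => hB.coeff a I • ∏ i, c i ^ I i := by
  refine NonarchimedeanAddGroup.summable_of_tendsto_cofinite_zero <|
    tendsto_zero_iff_norm_tendsto_zero.2 <|
      squeeze_zero (fun _ => norm_nonneg _) (fun I => ?_) (hB.coeff_tendsto a)
  exact (norm_smul_le _ _).trans
    (mul_le_mul_of_nonneg_left (norm_prod_pow_le_mweight hc I) (norm_nonneg _))

lemma hasSum_coeff_smul_prod_T_pow (hρ : ∀ i, 0 < ρ i) (a : B) :
    HasSum (fun I => hB.coeff a I • ∏ i, hB.T i ^ I i) a := by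
  have hs := (hB.summable_coeff_smul_prod_pow (fun i => (hB.norm_T hρ i).le) a).hasSum
  convert hs
  refine hB.coeff_injective (funext fun J => ?_)
  have hJ := hs.map ((LinearMap.proj J).comp hB.coeff) (hB.continuous_coeff hρ J)
  have ha : HasSum (fun I => hB.coeff (hB.coeff a I • ∏ i, hB.T i ^ I i) J) (hB.coeff a J) := by
    convert hasSum_single (f := fun I => hB.coeff a I * if J = I then 1 else 0) J
      (fun I hI => by simp [Ne.symm hI]) using 1
    · funext I
      simp [hB.coeff_prod_T_pow]
    · simp
  exact (hJ.unique ha).symm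

lemma algHom_ext_of_isBoundedHom (hρ : ∀ i, 0 < ρ i) {A : Type*} [NormedCommRing A]
    [NormedAlgebra k A] {φ₁ φ₂ : B →ₐ[k] A} (h₁ : IsBoundedHom φ₁.toRingHom)
    (h₂ : IsBoundedHom φ₂.toRingHom) (hT : ∀ i, φ₁ (hB.T i) = φ₂ (hB.T i)) : φ₁ = φ₂ := by
  have hmap : ∀ φ : B →ₐ[k] A, IsBoundedHom φ.toRingHom → ∀ a,
      HasSum (fun I => hB.coeff a I • ∏ i, φ (hB.T i) ^ I i) (φ a) := by
    rintro φ ⟨C, hC⟩ a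
    simpa [Function.comp_def] using
      (hB.hasSum_coeff_smul_prod_T_pow hρ a).map φ (AddMonoidHomClass.continuous_of_bound φ C hC)
  ext a
  exact (hmap φ₁ h₁ a).unique (by simpa only [hT] using hmap φ₂ h₂ a)

end Expansion

section Substitution

variable [IsUltrametricDist B] [CompleteSpace B] [NormOneClass B]
  {c : Fin m → B} (hc : ∀ i, ‖c i‖ ≤ ρ i)
include hc

def substLinearMap : B →ₗ[k] B where
  toFun a := ∑' I, hB.coeff a I • ∏ i, c i ^ I i
  map_add' a b := by
    simp only [map_add, Pi.add_apply, add_smul]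
    exact (hB.summable_coeff_smul_prod_pow hc a).tsum_add (hB.summable_coeff_smul_prod_pow hc b)
  map_smul' r a := by
    simp only [map_smul, Pi.smul_apply, smul_eq_mul, mul_smul, RingHom.id_apply]
    exact tsum_const_smul'' r

lemma substLinearMap_apply (a : B) :
    hB.substLinearMap hc a = ∑' I, hB.coeff a I • ∏ i, c i ^ I i :=
  rfl

lemma substLinearMap_of_coeff_eq {a : B} {J : Fin m → ℕ}
    (ha : hB.coeff a = fun I => if I = J then 1 else 0) :
    hB.substLinearMap hc a = ∏ i, c i ^ J i := by
  rw [substLinearMap_apply, ha, tsum_eq_single J fun I hI => by simp [hI]]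
  simp

lemma substLinearMap_mul (a b : B) :
    hB.substLinearMap hc (a * b) = hB.substLinearMap hc a * hB.substLinearMap hc b := by
  have ha := hB.summable_coeff_smul_prod_pow hc a
  have hb := hB.summable_coeff_smul_prod_pow hc b
  rw [substLinearMap_apply, substLinearMap_apply, substLinearMap_apply]
  have hab := ha.mul_of_nonarchimedean hb
  rw [ha.tsum_mul_tsum_eq_tsum_sum_antidiagonal hb hab]
  refine tsum_congr fun K => ?_
  rw [hB.coeff_mul, Finset.sum_smul]
  refine Finset.sum_congr rfl fun p hp => ?_
  rw [smul_mul_smul_comm, ← Finset.HasAntidiagonal.mem_antidiagonal.1 hp]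
  simp only [Pi.add_apply, pow_add, Finset.prod_mul_distrib]

def substAlgHom : B →ₐ[k] B :=
  AlgHom.ofLinearMap (hB.substLinearMap hc)
    (by simpa using hB.substLinearMap_of_coeff_eq hc hB.coeff_one) (hB.substLinearMap_mul hc)

lemma substAlgHom_apply (a : B) :
    hB.substAlgHom hc a = ∑' I, hB.coeff a I • ∏ i, c i ^ I i :=
  rfl

lemma substAlgHom_T (i : Fin m) : hB.substAlgHom hc (hB.T i) = c i := by
  rw [substAlgHom, AlgHom.ofLinearMap_apply, hB.substLinearMap_of_coeff_eq hc (hB.coeff_T i),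
    Fintype.prod_pow_single, pow_one]

variable (hρ : ∀ i, 0 < ρ i) {t : ℝ≥0} (hcT : ∀ i, ‖c i - hB.T i‖ ≤ t * ρ i)
include hρ hcT

lemma norm_substAlgHom_sub_le (a : B) : ‖hB.substAlgHom hc a - a‖ ≤ t * ‖a‖ := by
  have hsum := (hB.summable_coeff_smul_prod_pow hc a).hasSum.sub
    (hB.hasSum_coeff_smul_prod_T_pow hρ a)
  rw [substAlgHom_apply, ← hsum.tsum_eq]
  refine IsUltrametricDist.norm_tsum_le_of_forall_le_of_nonneg (by positivity) fun I => ?_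
  rw [← smul_sub]
  calc ‖hB.coeff a I • (∏ i, c i ^ I i - ∏ i, hB.T i ^ I i)‖
      ≤ ‖hB.coeff a I‖ * (t * mweight ρ I) :=
        (norm_smul_le _ _).trans <| mul_le_mul_of_nonneg_left
          (norm_prod_pow_sub_prod_pow_le hc (fun i => (hB.norm_T hρ i).le) hcT I) (norm_nonneg _)
    _ = t * (‖hB.coeff a I‖ * mweight ρ I) := by ring
    _ ≤ t * ‖a‖ := mul_le_mul_of_nonneg_left (hB.norm_coeff_mul_mweight_le a I) t.2

lemma norm_substAlgHom (ht : t < 1) (a : B) : ‖hB.substAlgHom hc a‖ = ‖a‖ := by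
  rcases eq_or_ne a 0 with rfl | ha
  · simp
  exact IsUltrametricDist.norm_eq_of_norm_sub_lt <|
    (hB.norm_substAlgHom_sub_le hc hρ hcT a).trans_lt (mul_lt_of_lt_one_left (norm_pos_iff.2 ha) ht)

lemma substAlgHom_surjective (ht : t < 1) : Function.Surjective (hB.substAlgHom hc) :=
  (hB.substAlgHom hc).toRingHom.toAddMonoidHom.surjective_of_norm_sub_le ht
    (hB.norm_substAlgHom_sub_le hc hρ hcT)

end Substitution

end IsTateAlgebra

theorem distinguished_surjection_of_small_perturbation_general
    (k : Type u) [NormedField k] [CompleteSpace k] [IsUltrametricDist k]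
    (A : Type v) [NormedCommRing A] [NormedAlgebra k A]
    {m : ℕ} (ρ : Fin m → ℝ) (hρ : ∀ i, 0 < ρ i)
    (B : Type u) [NormedCommRing B] [NormedAlgebra k B]
    (hB : IsTateAlgebra k ρ B)
    (ψ : B →ₐ[k] A)
    (hdist : IsDistinguishedSurj ψ.toRingHom)
    (g : Fin m → A)
    (hclose : ∀ i, spNorm (ψ (hB.T i) - g i) < ρ i) :
    (∃ ψ' : B →ₐ[k] A, IsBoundedHom ψ'.toRingHom ∧ ∀ i, ψ' (hB.T i) = g i) ∧
    ∀ ψ' : B →ₐ[k] A, IsBoundedHom ψ'.toRingHom → (∀ i, ψ' (hB.T i) = g i) →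
      IsDistinguishedSurj ψ'.toRingHom := by
  have := hB.isUltrametricDist hρ
  have := hB.completeSpace hρ
  have := hB.normOneClass hρ
  choose h hψh hh using fun i => hdist.2.2 (ψ (hB.T i) - g i)
  have hh_lt : ∀ i, ‖h i‖ < ρ i := fun i => (hh i).trans_lt (hclose i)
  obtain ⟨t, ht, hht⟩ := exists_lt_one_forall_le_mul hρ hh_lt
  have hcT : ∀ i, ‖(hB.T i - h i) - hB.T i‖ ≤ t * ρ i := fun i => by simpa using hht i
  have hc : ∀ i, ‖hB.T i - h i‖ ≤ ρ i := fun i => by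
    rw [sub_eq_add_neg]
    refine (IsUltrametricDist.norm_add_le_max _ _).trans (max_le (hB.norm_T hρ i).le ?_)
    exact (norm_neg (h i)).trans_le (hh_lt i).le
  set φ := ψ.comp (hB.substAlgHom hc)
  have hφT : ∀ i, φ (hB.T i) = g i := fun i => by
    simp [φ, hB.substAlgHom_T, show ψ (h i) = _ from hψh i]
  have hφ : IsDistinguishedSurj φ.toRingHom :=
    hdist.comp_of_norm_eq (hB.norm_substAlgHom hc hρ hcT ht)
      (hB.substAlgHom_surjective hc hρ hcT ht)
  refine ⟨⟨φ, hφ.1, hφT⟩, fun ψ' hψ' hψ'T => ?_⟩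
  rwa [hB.algHom_ext_of_isBoundedHom hρ hψ' hφ.1 fun i => (hψ'T i).trans (hφT i).symm]

theorem distinguished_surjection_of_small_perturbation
    (k : Type u) [NormedField k] [CompleteSpace k] [IsUltrametricDist k]
    (A : Type v) [NormedCommRing A] [NormedAlgebra k A]
      [CompleteSpace A] [IsUltrametricDist A]
    (hAff : IsAffinoidAlgebra k A)
    {m : ℕ} (ρ : Fin m → ℝ) (hρ : ∀ i, 0 < ρ i)
    (B : Type u) [NormedCommRing B] [NormedAlgebra k B]
    (hB : IsTateAlgebra k ρ B)
    (ψ : B →ₐ[k] A)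
    (hdist : IsDistinguishedSurj ψ.toRingHom)
    (hvals : ∀ i, spNorm (ψ (hB.T i)) = ρ i)
    (g : Fin m → A)
    (hclose : ∀ i, spNorm (ψ (hB.T i) - g i) < ρ i) :
    (∃ ψ' : B →ₐ[k] A, IsBoundedHom ψ'.toRingHom ∧ ∀ i, ψ' (hB.T i) = g i) ∧
    ∀ ψ' : B →ₐ[k] A, IsBoundedHom ψ'.toRingHom → (∀ i, ψ' (hB.T i) = g i) →
      IsDistinguishedSurj ψ'.toRingHom :=
  distinguished_surjection_of_small_perturbation_general k A ρ hρ B hB ψ hdist g hclose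

end
end

section
/- Let R be a valuation ring with fraction field F, let A be a torsion-free (equivalently, flat) R-algebra, and let a be an element of A_F := A ⊗_R F. Then a is integral over the image of A in A_F if and only if for every linearly ordered abelian group with zero Γ₀ and every valuation v : A_F → Γ₀ such that v(x) ≤ 1 for every x in the image of A, one has v(a) ≤ 1. -/
open Polynomial in
theorem aux_val_le_one {A B Γ₀ : Type*} [CommRing A] [CommRing B] [Algebra A B]
    [LinearOrderedCommGroupWithZero Γ₀] (v : Valuation B Γ₀)
    (hv : ∀ x : A, v (algebraMap A B x) ≤ 1) {a : B} (ha : IsIntegral A a) : v a ≤ 1 := by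
  obtain ⟨p, hpm, hpx⟩ := ha
  refine le_of_not_gt fun hvx : 1 < v a => ?_
  rw [hpm.as_sum, eval₂_add, eval₂_pow, eval₂_X, eval₂_finset_sum, add_eq_zero_iff_eq_neg] at hpx
  replace hpx := congr_arg v hpx
  refine ne_of_gt ?_ hpx
  rw [v.map_neg, v.map_pow]
  refine v.map_sum_lt' (zero_lt_one.trans_le (one_le_pow_of_one_le' hvx.le _)) fun i hi => ?_
  rw [eval₂_mul, eval₂_pow, eval₂_C, eval₂_X, v.map_mul, v.map_pow, ←
    one_mul (v a ^ p.natDegree)]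
  cases' (hv <| p.coeff i).lt_or_eq with hvpi hvpi
  · exact mul_lt_mul'' hvpi (pow_lt_pow_right₀ hvx <| Finset.mem_range.1 hi) zero_le' zero_le'
  · rw [hvpi, one_mul, one_mul]; exact pow_lt_pow_right₀ hvx (Finset.mem_range.1 hi)


set_option maxHeartbeats 1600000
set_option synthInstance.maxHeartbeats 400000
theorem aux_not_integral {A : Type*} {B : Type w} [CommRing A] [CommRing B] [Algebra A B]
    {a : B} (ha : ¬ IsIntegral A a) :
    ∃ (Γ₀ : Type w) (_ : LinearOrderedCommGroupWithZero Γ₀) (v : Valuation B Γ₀),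
      (∀ x : A, v (algebraMap A B x) ≤ 1) ∧ ¬ v a ≤ 1 := by
  classical
  let f0 : A →+* B := algebraMap A B
  let Bb := Localization.Away a
  let φ : B →+* Bb := algebraMap B Bb
  let f : A →+* Bb := φ.comp f0
  let t : Bb := IsLocalization.Away.invSelf a
  have hat : φ a * t = 1 := IsLocalization.Away.mul_invSelf a
  let E : Subring Bb := (Polynomial.eval₂RingHom f t).range
  have htE : t ∈ E := ⟨Polynomial.X, Polynomial.eval₂_X f t⟩
  have hfE : ∀ x : A, f x ∈ E := fun x => ⟨Polynomial.C x, Polynomial.eval₂_C f t⟩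
  -- `t` is not a unit in `E`
  have hnu : (⟨t, htE⟩ : E) ∈ nonunits E := by
    intro hu
    apply ha
    obtain ⟨u, hu⟩ := isUnit_iff_exists_inv'.mp hu
    have hu' : (u : Bb) * t = 1 := congrArg Subtype.val hu
    have hau : φ a = (u : Bb) := by
      calc φ a = φ a * ((u : Bb) * t) := by rw [hu', mul_one]
      _ = (u : Bb) * (φ a * t) := by ring
      _ = (u : Bb) := by rw [hat, mul_one]
    obtain ⟨p, hp⟩ := u.2
    have hp : Polynomial.eval₂ f t p = φ a := by rw [← hau] at hp; exact hp
    set d := p.natDegree with hd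
    have key : ∀ i ≤ d, t ^ i * φ a ^ d = φ a ^ (d - i) := by
      intro i hi
      have h1 : t ^ i * φ a ^ i = 1 := by rw [← mul_pow, mul_comm, hat, one_pow]
      calc t ^ i * φ a ^ d = t ^ i * (φ a ^ i * φ a ^ (d - i)) := by
            rw [← pow_add, Nat.add_sub_cancel' hi]
        _ = (t ^ i * φ a ^ i) * φ a ^ (d - i) := by ring
        _ = φ a ^ (d - i) := by rw [h1, one_mul]
    have hsum : φ a ^ (d + 1) = ∑ i ∈ Finset.range (d + 1), f (p.coeff i) * φ a ^ (d - i) := by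
      calc φ a ^ (d + 1) = (Polynomial.eval₂ f t p) * φ a ^ d := by rw [hp]; ring
        _ = (∑ i ∈ Finset.range (d + 1), f (p.coeff i) * t ^ i) * φ a ^ d := by
            rw [Polynomial.eval₂_eq_sum_range]
        _ = ∑ i ∈ Finset.range (d + 1), f (p.coeff i) * φ a ^ (d - i) := by
            rw [Finset.sum_mul]
            refine Finset.sum_congr rfl fun i hi => ?_
            rw [mul_assoc, key i (Nat.lt_succ_iff.mp (Finset.mem_range.mp hi))]
    let q : Polynomial A := Polynomial.X ^ (d + 1) -
      ∑ i ∈ Finset.range (d + 1), Polynomial.C (p.coeff i) * Polynomial.X ^ (d - i)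
    have hq : q.Monic := by
      refine Polynomial.monic_X_pow_sub ?_
      refine lt_of_le_of_lt (Polynomial.degree_sum_le _ _) ?_
      rw [Finset.sup_lt_iff (by exact WithBot.bot_lt_coe _)]
      intro i hi
      exact lt_of_le_of_lt (Polynomial.degree_C_mul_X_pow_le _ _)
        (WithBot.coe_lt_coe.mpr (Nat.lt_succ_of_le (Nat.sub_le d i)))
    have hqz : Polynomial.eval₂ f (φ a) q = 0 := by
      simp only [q, Polynomial.eval₂_sub, Polynomial.eval₂_pow, Polynomial.eval₂_X,
        Polynomial.eval₂_finset_sum, Polynomial.eval₂_mul, Polynomial.eval₂_C]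
      rw [sub_eq_zero]
      exact hsum
    have hφz : φ (Polynomial.eval₂ f0 a q) = 0 := by
      rw [Polynomial.hom_eval₂]; exact hqz
    obtain ⟨⟨s, hs⟩, hsz⟩ :=
      (IsLocalization.map_eq_zero_iff (Submonoid.powers a) Bb _).mp hφz
    obtain ⟨n, rfl⟩ := hs
    refine ⟨Polynomial.X ^ n * q, (Polynomial.monic_X_pow n).mul hq, ?_⟩
    rw [Polynomial.eval₂_mul, Polynomial.eval₂_pow, Polynomial.eval₂_X]
    exact hsz
  obtain ⟨m, hm, htm⟩ := exists_max_ideal_of_mem_nonunits hnu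
  haveI := hm
  haveI : m.IsPrime := hm.isPrime
  let S : Submonoid Bb := Submonoid.map (E.subtype : ↥E →+* Bb) m.primeCompl
  let D := Localization S
  haveI : Nontrivial D := by
    refine ⟨0, 1, fun h01 => ?_⟩
    have h1 : algebraMap Bb D 1 = 0 := by rw [map_one]; exact h01.symm
    obtain ⟨⟨s, hs⟩, hs0⟩ := (IsLocalization.map_eq_zero_iff S D 1).mp h1
    obtain ⟨c, hc, rfl⟩ := hs
    rw [mul_one] at hs0
    have : c = 0 := Subtype.ext hs0
    exact hc (this ▸ m.zero_mem)
  obtain ⟨M, hM⟩ := Ideal.exists_maximal D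
  haveI := hM
  let q : Ideal Bb := M.comap (algebraMap Bb D)
  haveI : q.IsPrime := Ideal.IsPrime.comap _
  let Q := Bb ⧸ q
  let K := FractionRing Q
  let ψ : Bb →+* K := (algebraMap Q K).comp (Ideal.Quotient.mk q)
  have hSq : ∀ s ∈ S, s ∉ q := by
    intro s hs hsq
    have hunit : IsUnit (algebraMap Bb D s) := IsLocalization.map_units D ⟨s, hs⟩
    exact hM.ne_top (M.eq_top_of_isUnit_mem hsq hunit)
  have hψne : ∀ s ∈ S, ψ s ≠ 0 := by
    intro s hs h0
    have h0' : (Ideal.Quotient.mk q) s = 0 :=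
      IsFractionRing.injective Q K (h0.trans (map_zero (algebraMap Q K)).symm)
    exact hSq s hs (Ideal.Quotient.eq_zero_iff_mem.mp h0')
  have hunit : ∀ c : m.primeCompl, IsUnit ((ψ.comp E.subtype) c) := by
    intro c
    exact isUnit_iff_ne_zero.mpr (hψne _ ⟨c.1, c.2, rfl⟩)
  let Cm := Localization.AtPrime m
  let g : Cm →+* K := IsLocalization.lift (S := Cm) hunit
  have hg : ∀ c : E, g (algebraMap E Cm c) = ψ c := fun c => IsLocalization.lift_eq hunit c
  obtain ⟨V, hV, hloc⟩ := IsLocalRing.exists_factor_valuationRing g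
  refine ⟨V.ValueGroup, inferInstance, V.valuation.comap (ψ.comp φ), ?_, ?_⟩
  · intro x
    show V.valuation (ψ (φ (algebraMap A B x))) ≤ 1
    rw [ValuationSubring.valuation_le_one_iff]
    have := hV (algebraMap E Cm ⟨f x, hfE x⟩)
    rwa [hg ⟨f x, hfE x⟩] at this
  · intro hle
    have hprod : ψ (φ a) * ψ t = 1 := by rw [← map_mul, hat, map_one]
    have htm' : algebraMap E Cm ⟨t, htE⟩ ∈ IsLocalRing.maximalIdeal Cm :=
      (IsLocalization.AtPrime.to_map_mem_maximal_iff Cm m _).mpr htm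
    have hgt : (⟨g (algebraMap E Cm ⟨t, htE⟩), hV _⟩ : V) ∈ IsLocalRing.maximalIdeal V := by
      rw [IsLocalRing.mem_maximalIdeal]
      intro hu
      have hu' : IsUnit ((g.codRestrict V.toSubring hV) (algebraMap E Cm ⟨t, htE⟩)) := hu
      exact (IsLocalRing.mem_maximalIdeal _).mp htm' (hloc.1 _ hu')
    have hlt : V.valuation (ψ t) < 1 := by
      have h := (ValuationSubring.valuation_lt_one_iff V _).mp hgt
      rw [← hg ⟨t, htE⟩]
      exact h
    have hge : (1 : V.ValueGroup) ≤ V.valuation (ψ t) := by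
      calc (1 : V.ValueGroup) = V.valuation (ψ (φ a)) * V.valuation (ψ t) := by
            rw [← map_mul, hprod, map_one]
        _ ≤ 1 * V.valuation (ψ t) := mul_le_mul_left hle _
        _ = V.valuation (ψ t) := one_mul _
    exact absurd hlt (not_lt.mpr hge)

noncomputable section

open scoped TensorProduct

theorem integral_iff_le_one_for_all_valuations
    (R : Type u) [CommRing R] [IsDomain R] [ValuationRing R]
    (A : Type v) [CommRing A] [Algebra R A] [NoZeroSMulDivisors R A]
    (a : A ⊗[R] (FractionRing R)) :
    IsIntegral A a ↔
      ∀ (Γ₀ : Type (max u v)) (_ : LinearOrderedCommGroupWithZero Γ₀)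
        (v : Valuation (A ⊗[R] (FractionRing R)) Γ₀),
        (∀ x : A, v (algebraMap A (A ⊗[R] (FractionRing R)) x) ≤ 1) → v a ≤ 1 := by
  constructor
  · intro ha Γ₀ _ v hv
    exact aux_val_le_one v hv ha
  · intro h
    by_contra hna
    obtain ⟨Γ₀, inst, v, hv, hva⟩ := aux_not_integral hna
    exact hva (h Γ₀ inst v hv)

end
end
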